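/- arXiv:2311.05529 — 4 statements merged into one kernel-verified Lean document; each statement's English description precedes it below -/
import Mathlib

section
/- For density matrices ρ and σ on a finite-dimensional Hilbert space with the support of ρ contained in the support of σ, the quantum relative entropy D(ρ‖σ) is at least tr(ρH) − log tr(exp(log σ + H)) for every Hermitian matrix H. -/
open Matrix Kronecker ComplexOrder

noncomputable section

/-- Matrix exponential. -/
noncomputable def mexp {ι : Type*} [Fintype ι] [DecidableEq ι] (A : Matrix ι ι ℂ) :
    Matrix ι ι ℂ := NormedSpace.exp A

/-- Matrix logarithm of a Hermitian matrix, taken on its support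
(zero eigenvalues are mapped to zero, since `Real.log 0 = 0`). -/
noncomputable def matLog {ι : Type*} [Fintype ι] [DecidableEq ι] (A : Matrix ι ι ℂ) :
    Matrix ι ι ℂ :=
  if hA : A.IsHermitian then
    (hA.eigenvectorUnitary : Matrix ι ι ℂ) *
      Matrix.diagonal (fun i => (Real.log (hA.eigenvalues i) : ℂ)) *
      (star (hA.eigenvectorUnitary : Matrix ι ι ℂ))
  else 0

/-- A density matrix: positive semidefinite with unit trace. -/
def IsDensity {ι : Type*} [Fintype ι] (ρ : Matrix ι ι ℂ) : Prop :=
  ρ.PosSemidef ∧ ρ.trace = 1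

/-- `supp ρ ⊆ supp σ`, expressed as kernel containment `ker σ ⊆ ker ρ`. -/
def SuppLE {ι : Type*} [Fintype ι] (ρ σ : Matrix ι ι ℂ) : Prop :=
  ∀ v : ι → ℂ, σ.mulVec v = 0 → ρ.mulVec v = 0

/-- Quantum relative entropy `D(ρ‖σ) = tr(ρ (log ρ - log σ))`. -/
noncomputable def relEnt {ι : Type*} [Fintype ι] [DecidableEq ι] (ρ σ : Matrix ι ι ℂ) : ℝ :=
  (Matrix.trace (ρ * (matLog ρ - matLog σ))).re

/-- Von Neumann entropy `H(ρ) = -tr(ρ log ρ)`. -/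
noncomputable def vnEntropy {ι : Type*} [Fintype ι] [DecidableEq ι] (ρ : Matrix ι ι ℂ) : ℝ :=
  - (Matrix.trace (ρ * matLog ρ)).re

/-- `L` is `α`-sub-gaussian w.r.t. the state `σ`:
`log tr(σ exp(λ(L - tr(Lσ)·I))) ≤ α²λ²/2` for all real `λ`. -/
def IsSubGaussianObs {ι : Type*} [Fintype ι] [DecidableEq ι]
    (L σ : Matrix ι ι ℂ) (α : ℝ) : Prop :=
  ∀ l : ℝ, Real.log ((Matrix.trace
      (σ * mexp ((l : ℂ) • (L - (Matrix.trace (L * σ)) • (1 : Matrix ι ι ℂ))))).re)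
    ≤ α ^ 2 * l ^ 2 / 2

/-- Partial trace over the first tensor factor. -/
noncomputable def ptraceFst {α β : Type*} [Fintype α]
    (ρ : Matrix (α × β) (α × β) ℂ) : Matrix β β ℂ :=
  Matrix.of fun i j => ∑ a, ρ (a, i) (a, j)

/-- Partial trace over the second tensor factor. -/
noncomputable def ptraceSnd {α β : Type*} [Fintype β]
    (ρ : Matrix (α × β) (α × β) ℂ) : Matrix α α ℂ :=
  Matrix.of fun i j => ∑ b, ρ (i, b) (j, b)

/-!
Diagonalize `ρ = ∑ᵢ pᵢ vᵢvᵢ*` and the Hermitian matrix `A = log σ + H = ∑ⱼ aⱼ uⱼuⱼ*`. Then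
`tr(ρA) = ∑ᵢⱼ pᵢ cᵢⱼ aⱼ`, where `cᵢⱼ = |⟨vᵢ, uⱼ⟩|²` is doubly stochastic because `(⟨vᵢ, uⱼ⟩)`
is unitary. The Fenchel–Young inequality `p x ≤ p log p - p + eˣ` at `x = aⱼ - log ∑ₖ e^{aₖ}`,
weighted by `cᵢⱼ` and summed, gives the Gibbs variational inequality
`tr(ρA) ≤ tr(ρ log ρ) + log tr e^A`; subtracting `tr(ρ log σ)` gives the claim.
-/

/-- Fenchel–Young for the convex function `p ↦ p log p - p`, whose conjugate is `exp`. -/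
theorem Real.mul_le_mul_log_sub_add_exp {p : ℝ} (hp : 0 ≤ p) (x : ℝ) :
    p * x ≤ p * Real.log p - p + Real.exp x := by
  rcases hp.eq_or_lt with rfl | hp
  · simpa using (Real.exp_pos x).le
  · have h := Real.add_one_le_exp (x - Real.log p)
    rw [Real.exp_sub, Real.exp_log hp, le_div_iff₀ hp] at h
    linarith

section

variable {ι : Type*} [Fintype ι] [DecidableEq ι]

open Real in
theorem sum_mul_mul_le_sum_mul_log_add_log_sum_exp {c : Matrix ι ι ℝ}
    (hc : c ∈ doublyStochastic ℝ ι) {p : ι → ℝ} (hp0 : ∀ i, 0 ≤ p i) (hp1 : ∑ i, p i = 1)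
    (a : ι → ℝ) :
    ∑ i, ∑ j, p i * c i j * a j ≤ ∑ i, p i * log (p i) + log (∑ j, exp (a j)) := by
  set Z := ∑ j, exp (a j)
  have hι : Nonempty ι := by
    by_contra h
    simp [not_nonempty_iff.mp h] at hp1
  have hZ : 0 < Z := Finset.sum_pos (fun j _ => exp_pos _) Finset.univ_nonempty
  have hrow (i : ι) (x : ℝ) : ∑ j, c i j * x = x := by
    rw [← Finset.sum_mul, sum_row_of_mem_doublyStochastic hc, one_mul]
  have hcol (j : ι) (x : ℝ) : ∑ i, c i j * x = x := by
    rw [← Finset.sum_mul, sum_col_of_mem_doublyStochastic hc, one_mul]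
  have hyoung (i j : ι) : c i j * (p i * (a j - log Z))
      ≤ c i j * (p i * log (p i) - p i + exp (a j) / Z) := by
    have := mul_le_mul_log_sub_add_exp (hp0 i) (a j - log Z)
    rw [exp_sub, exp_log hZ] at this
    exact mul_le_mul_of_nonneg_left this (nonneg_of_mem_doublyStochastic hc)
  calc ∑ i, ∑ j, p i * c i j * a j
      = ∑ i, ∑ j, c i j * (p i * (a j - log Z)) + log Z := by
        have hmass : ∑ i, ∑ j, c i j * (p i * log Z) = log Z := by
          simp only [hrow, ← Finset.sum_mul, hp1, one_mul]
        simp only [mul_sub, Finset.sum_sub_distrib, hmass, sub_add_cancel]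
        exact Finset.sum_congr rfl fun i _ => Finset.sum_congr rfl fun j _ => by ring
    _ ≤ ∑ i, ∑ j, c i j * (p i * log (p i) - p i + exp (a j) / Z) + log Z := by
        gcongr ?_ + _
        exact Finset.sum_le_sum fun i _ => Finset.sum_le_sum fun j _ => hyoung i j
    _ = ∑ i, (p i * log (p i) - p i) + ∑ j, exp (a j) / Z + log Z := by
        simp only [mul_add, Finset.sum_add_distrib, hrow]
        rw [Finset.sum_comm, Finset.sum_congr rfl fun j _ => hcol j _]
    _ = ∑ i, p i * log (p i) + log Z := by
        rw [← Finset.sum_div, div_self hZ.ne', Finset.sum_sub_distrib, hp1]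
        ring

theorem normSq_mem_doublyStochastic {W : Matrix ι ι ℂ} (hW : W ∈ unitaryGroup ι ℂ) :
    Matrix.of (fun i j => Complex.normSq (W i j)) ∈ doublyStochastic ℝ ι := by
  have hrow (i : ι) : ∑ j, (Complex.normSq (W i j) : ℂ) = 1 := by
    simpa [Matrix.mul_apply, Complex.mul_conj, one_apply_eq] using
      congrFun (congrFun (mem_unitaryGroup_iff.mp hW) i) i
  have hcol (j : ι) : ∑ i, (Complex.normSq (W i j) : ℂ) = 1 := by
    simpa [Matrix.mul_apply, Complex.conj_mul', one_apply_eq, Complex.normSq_eq_norm_sq] using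
      congrFun (congrFun (mem_unitaryGroup_iff'.mp hW) j) j
  exact mem_doublyStochastic_iff_sum.mpr
    ⟨fun i j => Complex.normSq_nonneg _, fun i => by exact_mod_cast hrow i,
      fun j => by exact_mod_cast hcol j⟩

theorem trace_conj_diagonal_mul_conj_diagonal (U V : Matrix ι ι ℂ) (d e : ι → ℝ) :
    (U * diagonal (fun i => (d i : ℂ)) * star U *
        (V * diagonal (fun j => (e j : ℂ)) * star V)).trace
      = ∑ i, ∑ j, ((d i * Complex.normSq ((star U * V) i j) * e j : ℝ) : ℂ) := by
  have hcycle : (U * diagonal (fun i => (d i : ℂ)) * star U *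
        (V * diagonal (fun j => (e j : ℂ)) * star V)).trace
      = (diagonal (fun i => (d i : ℂ)) * (star U * V) * diagonal (fun j => (e j : ℂ))
          * star (star U * V)).trace := by
    rw [Matrix.mul_assoc U, Matrix.mul_assoc U, Matrix.trace_mul_comm U]
    simp only [StarMul.star_mul, star_star, Matrix.mul_assoc]
  rw [hcycle, Matrix.trace]
  refine Finset.sum_congr rfl fun i _ => Finset.sum_congr rfl fun j _ => ?_
  simp only [mul_diagonal, diagonal_mul, star_apply, Complex.star_def, Complex.ofReal_mul,
    Complex.normSq_eq_conj_mul_self]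
  ring

namespace Matrix.IsHermitian

variable {A B : Matrix ι ι ℂ}

theorem eq_conj_diagonal (hA : A.IsHermitian) :
    A = (hA.eigenvectorUnitary : Matrix ι ι ℂ) * diagonal (fun i => (hA.eigenvalues i : ℂ))
      * star (hA.eigenvectorUnitary : Matrix ι ι ℂ) :=
  hA.spectral_theorem

theorem matLog_eq (hA : A.IsHermitian) :
    matLog A = (hA.eigenvectorUnitary : Matrix ι ι ℂ)
      * diagonal (fun i => (Real.log (hA.eigenvalues i) : ℂ))
      * star (hA.eigenvectorUnitary : Matrix ι ι ℂ) :=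
  dif_pos hA

theorem trace_mul_eq (hA : A.IsHermitian) (hB : B.IsHermitian) :
    (A * B).trace = ∑ i, ∑ j, ((hA.eigenvalues i * Complex.normSq
      ((star (hA.eigenvectorUnitary : Matrix ι ι ℂ) * hB.eigenvectorUnitary) i j)
        * hB.eigenvalues j : ℝ) : ℂ) := by
  conv_lhs => rw [hA.eq_conj_diagonal, hB.eq_conj_diagonal]
  exact trace_conj_diagonal_mul_conj_diagonal _ _ _ _

theorem trace_mul_matLog (hA : A.IsHermitian) :
    (A * matLog A).trace = ∑ i, ((hA.eigenvalues i * Real.log (hA.eigenvalues i) : ℝ) : ℂ) := by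
  rw [hA.matLog_eq]
  nth_rw 1 [hA.eq_conj_diagonal]
  rw [trace_conj_diagonal_mul_conj_diagonal, Unitary.coe_star_mul_self]
  simp [one_apply, apply_ite]

theorem trace_mexp (hA : A.IsHermitian) :
    (mexp A).trace = ∑ i, Complex.exp (hA.eigenvalues i) := by
  set U : Matrix ι ι ℂ := (hA.eigenvectorUnitary : Matrix ι ι ℂ)
  have hinv : U⁻¹ = star U := Matrix.inv_eq_left_inv (Unitary.coe_star_mul_self _)
  rw [mexp]
  conv_lhs => rw [hA.eq_conj_diagonal, ← hinv, Matrix.exp_conj _ _ Unitary.isUnit_coe]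
  rw [Matrix.trace_mul_cycle, hinv, Unitary.coe_star_mul_self, Matrix.one_mul, exp_diagonal,
    trace_diagonal]
  simp only [Pi.coe_exp, Complex.exp_eq_exp_ℂ]

end Matrix.IsHermitian

theorem matLog_isHermitian (A : Matrix ι ι ℂ) : (matLog A).IsHermitian := by
  by_cases hA : A.IsHermitian
  · rw [hA.matLog_eq, star_eq_conjTranspose]
    exact isHermitian_mul_mul_conjTranspose _
      (isHermitian_diagonal_iff.mpr fun i => Complex.conj_ofReal _)
  · simp [matLog, hA]

theorem IsDensity.re_trace_mul_add_vnEntropy_le {ρ A : Matrix ι ι ℂ} (hρ : IsDensity ρ)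
    (hA : A.IsHermitian) :
    (ρ * A).trace.re + vnEntropy ρ ≤ Real.log (mexp A).trace.re := by
  obtain ⟨hρpsd, hρtr⟩ := hρ
  have hp1 : ∑ i, hρpsd.1.eigenvalues i = 1 := by
    simpa [hρtr, Complex.re_sum] using
      (congrArg Complex.re hρpsd.1.trace_eq_sum_eigenvalues).symm
  have hW : star (hρpsd.1.eigenvectorUnitary : Matrix ι ι ℂ) * hA.eigenvectorUnitary
      ∈ unitaryGroup ι ℂ :=
    mul_mem (Unitary.star_mem (SetLike.coe_mem _)) (SetLike.coe_mem _)
  have hscalar := sum_mul_mul_le_sum_mul_log_add_log_sum_exp (normSq_mem_doublyStochastic hW)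
    hρpsd.eigenvalues_nonneg hp1 hA.eigenvalues
  rw [vnEntropy, hρpsd.1.trace_mul_eq hA, hρpsd.1.trace_mul_matLog, hA.trace_mexp]
  simp only [Complex.re_sum, Complex.ofReal_re, ← Complex.ofReal_exp, of_apply] at hscalar ⊢
  linarith

end

theorem petz_variational_lower_bound_general {n : ℕ} (ρ σ : Matrix (Fin n) (Fin n) ℂ)
    (hρ : IsDensity ρ)
    (H : Matrix (Fin n) (Fin n) ℂ) (hH : H.IsHermitian) :
    (Matrix.trace (ρ * H)).re - Real.log ((Matrix.trace (mexp (matLog σ + H))).re)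
      ≤ relEnt ρ σ := by
  have hgibbs := hρ.re_trace_mul_add_vnEntropy_le ((matLog_isHermitian σ).add hH)
  rw [Matrix.mul_add, Matrix.trace_add, Complex.add_re, vnEntropy] at hgibbs
  rw [relEnt, Matrix.mul_sub, Matrix.trace_sub, Complex.sub_re]
  linarith

/-- **Petz's variational lower bound.** For density matrices `ρ, σ` with
`supp ρ ⊆ supp σ` and any Hermitian `H`,
`D(ρ‖σ) ≥ tr(ρH) − log tr(exp(log σ + H))`. -/
theorem petz_variational_lower_bound {n : ℕ} (ρ σ : Matrix (Fin n) (Fin n) ℂ)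
    (hρ : IsDensity ρ) (hσ : IsDensity σ) (hsupp : SuppLE ρ σ)
    (H : Matrix (Fin n) (Fin n) ℂ) (hH : H.IsHermitian) :
    (Matrix.trace (ρ * H)).re - Real.log ((Matrix.trace (mexp (matLog σ + H))).re)
      ≤ relEnt ρ σ :=
  petz_variational_lower_bound_general ρ σ hρ H hH
end
end

section
/- Let L = (1/m) Σᵢ Lᵢ where each Lᵢ = I^{⊗(i−1)} ⊗ L̃ᵢ ⊗ I^{⊗(m−i)} acts nontrivially only on the i-th factor of an m-fold tensor product, and suppose each L̃ᵢ is αᵢ-sub-gaussian with respect to a state τᵢ. Then L is α-sub-gaussian with respect to τ₁ ⊗ ⋯ ⊗ τ_m with α = (1/m)·√(Σᵢ αᵢ²). -/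
open Matrix Kronecker ComplexOrder

noncomputable section

/-- The observable acting as `M` on the `i`-th tensor factor and as the
identity elsewhere. -/
noncomputable def embedAt (m d : ℕ) (i : Fin m) (M : Matrix (Fin d) (Fin d) ℂ) :
    Matrix (Fin m → Fin d) (Fin m → Fin d) ℂ :=
  Matrix.of fun x y =>
    M (x i) (y i) * ∏ j ∈ Finset.univ.erase i, (if x j = y j then (1 : ℂ) else 0)

/-- The tensor product state `τ₁ ⊗ ⋯ ⊗ τ_m`. -/
noncomputable def tensorPow (m d : ℕ) (τ : Fin m → Matrix (Fin d) (Fin d) ℂ) :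
    Matrix (Fin m → Fin d) (Fin m → Fin d) ℂ :=
  Matrix.of fun x y => ∏ i, τ i (x i) (y i)

/-!
The centred exponent `λ (L - tr(Lσ) I)` is a sum of commuting terms, each acting on one tensor
factor, so its exponential is the tensor product of the local exponentials and its expectation in
the product state `σ = τ₁ ⊗ ⋯ ⊗ τ_m` factorises. Every factor is a positive real number (a state
against the exponential of a Hermitian matrix), so the logarithm turns the product into a sum, and
the local bounds add up: `Σᵢ αᵢ² λ² / 2 = (√(Σᵢ αᵢ²))² λ² / 2`. The averaging factor `1/m` only
rescales `λ`.
-/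

section Centering

variable {ι : Type*} [Fintype ι] [DecidableEq ι]

def centered (A σ : Matrix ι ι ℂ) : Matrix ι ι ℂ :=
  A - (A * σ).trace • 1

lemma centered_smul (c : ℂ) (A σ : Matrix ι ι ℂ) :
    centered (c • A) σ = c • centered A σ := by
  simp only [centered, smul_mul, trace_smul, smul_sub, smul_smul, smul_eq_mul]

lemma isHermitian_centered {A σ : Matrix ι ι ℂ}
    (hA : A.IsHermitian) (hσ : σ.IsHermitian) : (centered A σ).IsHermitian := by
  have hmean : IsSelfAdjoint (A * σ).trace := by
    rw [IsSelfAdjoint, ← trace_conjTranspose, conjTranspose_mul, hA.eq, hσ.eq, trace_mul_comm]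
  exact hA.sub (isHermitian_one.smul hmean)

-- `tr(τ e^H) = tr(e^{H/2} τ e^{H/2})` is the trace of a nonzero positive semidefinite matrix.
lemma trace_mul_mexp_pos {τ H : Matrix ι ι ℂ}
    (hτ : IsDensity τ) (hH : H.IsHermitian) : 0 < (τ * mexp H).trace := by
  have hCC : mexp ((1 / 2 : ℂ) • H) * mexp ((1 / 2 : ℂ) • H) = mexp H := by
    simp only [mexp]
    rw [← Matrix.exp_add_of_commute _ _ (Commute.refl _), ← add_smul]
    norm_num
  set C := mexp ((1 / 2 : ℂ) • H)
  have hC : C.IsHermitian := (hH.smul (by simp [IsSelfAdjoint])).exp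
  have htrace : (τ * mexp H).trace = (Cᴴ * τ * C).trace := by
    rw [hC.eq, ← hCC, ← mul_assoc, trace_mul_comm, ← mul_assoc]
  have hpsd : (Cᴴ * τ * C).PosSemidef := hτ.1.conjTranspose_mul_mul_same C
  have hunit : IsUnit C := Matrix.isUnit_exp _
  have hne : Cᴴ * τ * C ≠ 0 := by
    rw [hC.eq, ne_eq, hunit.mul_left_eq_zero, hunit.mul_right_eq_zero]
    rintro rfl
    simpa using hτ.2
  rw [htrace]
  exact hpsd.trace_nonneg.lt_of_ne' (mt hpsd.trace_eq_zero_iff.mp hne)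

lemma IsSubGaussianObs.ofReal_smul {L σ : Matrix ι ι ℂ} {α : ℝ} (h : IsSubGaussianObs L σ α)
    (c : ℝ) :
    IsSubGaussianObs ((c : ℂ) • L) σ (c * α) := by
  intro l
  have hscale : (l : ℂ) • centered ((c : ℂ) • L) σ = ((l * c : ℝ) : ℂ) • centered L σ := by
    rw [centered_smul, smul_smul]
    push_cast
    rfl
  calc _ ≤ α ^ 2 * (l * c) ^ 2 / 2 := by
        rw [← centered, hscale]
        exact h (l * c)
    _ = (c * α) ^ 2 * l ^ 2 / 2 := by ring

end Centering

section TensorProduct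

variable {m d : ℕ}

lemma tensorPow_mul (f g : Fin m → Matrix (Fin d) (Fin d) ℂ) :
    tensorPow m d f * tensorPow m d g = tensorPow m d (f * g) := by
  ext x y
  simp only [mul_apply, tensorPow, of_apply, Pi.mul_apply, ← Finset.prod_mul_distrib]
  rw [← Fintype.piFinset_univ, Finset.prod_univ_sum]

lemma tensorPow_one : tensorPow m d 1 = 1 := by
  ext x y
  simp only [tensorPow, of_apply, Pi.one_apply, one_apply, Finset.prod_boole]
  simp [funext_iff]

lemma trace_tensorPow (f : Fin m → Matrix (Fin d) (Fin d) ℂ) :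
    (tensorPow m d f).trace = ∏ i, (f i).trace := by
  simp only [trace, diag, tensorPow, of_apply]
  rw [Finset.prod_univ_sum, Fintype.piFinset_univ]

def tensorPowHom (m d : ℕ) :
    (Fin m → Matrix (Fin d) (Fin d) ℂ) →* Matrix (Fin m → Fin d) (Fin m → Fin d) ℂ where
  toFun := tensorPow m d
  map_one' := tensorPow_one
  map_mul' f g := (tensorPow_mul f g).symm

lemma embedAt_eq_tensorPow_mulSingle (i : Fin m) (M : Matrix (Fin d) (Fin d) ℂ) :
    embedAt m d i M = tensorPow m d (Pi.mulSingle i M) := by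
  ext x y
  simp only [embedAt, tensorPow, of_apply]
  rw [← Finset.mul_prod_erase _ _ (Finset.mem_univ i), Pi.mulSingle_eq_same]
  congr 1
  refine Finset.prod_congr rfl fun j hj => ?_
  simp [Pi.mulSingle_eq_of_ne (Finset.ne_of_mem_erase hj), one_apply]

def embedAtRingHom (m d : ℕ) (i : Fin m) :
    Matrix (Fin d) (Fin d) ℂ →+* Matrix (Fin m → Fin d) (Fin m → Fin d) ℂ where
  toFun := embedAt m d i
  map_one' := by rw [embedAt_eq_tensorPow_mulSingle, Pi.mulSingle_one, tensorPow_one]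
  map_mul' A B := by
    simp only [embedAt_eq_tensorPow_mulSingle, tensorPow_mul, Pi.mulSingle_mul]
  map_zero' := by ext x y; simp [embedAt]
  map_add' A B := by ext x y; simp [embedAt, add_mul]

lemma embedAt_smul (i : Fin m) (c : ℂ) (M : Matrix (Fin d) (Fin d) ℂ) :
    embedAt m d i (c • M) = c • embedAt m d i M := by
  ext x y
  simp [embedAt, mul_assoc]

lemma embedAt_one (i : Fin m) : embedAt m d i 1 = 1 := map_one (embedAtRingHom m d i)

lemma embedAt_sub (i : Fin m) (A B : Matrix (Fin d) (Fin d) ℂ) :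
    embedAt m d i (A - B) = embedAt m d i A - embedAt m d i B :=
  map_sub (embedAtRingHom m d i) A B

lemma continuous_embedAt (i : Fin m) : Continuous (embedAt m d i) := by
  unfold embedAt
  fun_prop

lemma mexp_embedAt (i : Fin m) (M : Matrix (Fin d) (Fin d) ℂ) :
    mexp (embedAt m d i M) = embedAt m d i (mexp M) := by
  open scoped Matrix.Norms.Operator in
  exact (NormedSpace.map_exp (embedAtRingHom m d i) (continuous_embedAt i) M).symm

lemma mexp_sum_embedAt (M : Fin m → Matrix (Fin d) (Fin d) ℂ) :
    mexp (∑ i, embedAt m d i (M i)) = tensorPow m d (fun i => mexp (M i)) := by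
  have hcomm : ∀ i j, Commute (embedAt m d i (M i)) (embedAt m d j (M j)) := fun i j => by
    simp only [embedAt_eq_tensorPow_mulSingle]
    exact (Pi.mulSingle_apply_commute M i j).map (tensorPowHom m d)
  rw [mexp, Matrix.exp_sum_of_commute _ _ fun i _ j _ _ => hcomm i j]
  simp only [← mexp.eq_def, mexp_embedAt]
  simp only [embedAt_eq_tensorPow_mulSingle]
  exact (Finset.map_noncommProd _ _ _ (tensorPowHom m d)).symm.trans
    (congrArg (tensorPowHom m d) (Finset.noncommProd_mulSingle fun i => mexp (M i)))

lemma trace_embedAt_mul_tensorPow {τ : Fin m → Matrix (Fin d) (Fin d) ℂ}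
    (hτ : ∀ j, (τ j).trace = 1) (i : Fin m) (M : Matrix (Fin d) (Fin d) ℂ) :
    (embedAt m d i M * tensorPow m d τ).trace = (M * τ i).trace := by
  rw [embedAt_eq_tensorPow_mulSingle, tensorPow_mul, trace_tensorPow,
    ← Finset.mul_prod_erase _ _ (Finset.mem_univ i), Finset.prod_eq_one fun j hj => ?_]
  · simp
  · simp [Pi.mulSingle_eq_of_ne (Finset.ne_of_mem_erase hj), hτ j]

lemma centered_sum_embedAt {τ : Fin m → Matrix (Fin d) (Fin d) ℂ}
    (hτ : ∀ j, (τ j).trace = 1) (A : Fin m → Matrix (Fin d) (Fin d) ℂ) :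
    centered (∑ i, embedAt m d i (A i)) (tensorPow m d τ)
      = ∑ i, embedAt m d i (centered (A i) (τ i)) := by
  simp only [centered, Finset.sum_mul, trace_sum, trace_embedAt_mul_tensorPow hτ,
    embedAt_sub, embedAt_smul, embedAt_one, Finset.sum_sub_distrib, Finset.sum_smul]

theorem isSubGaussianObs_sum_embedAt {Lt τ : Fin m → Matrix (Fin d) (Fin d) ℂ} {α : Fin m → ℝ}
    (hLt : ∀ i, (Lt i).IsHermitian) (hτ : ∀ i, IsDensity (τ i))
    (hsg : ∀ i, IsSubGaussianObs (Lt i) (τ i) (α i)) :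
    IsSubGaussianObs (∑ i, embedAt m d i (Lt i)) (tensorPow m d τ) √(∑ i, α i ^ 2) := by
  intro l
  set t : Fin m → ℂ := fun i => (τ i * mexp ((l : ℂ) • centered (Lt i) (τ i))).trace
  have hfactor : (tensorPow m d τ * mexp ((l : ℂ) •
      centered (∑ i, embedAt m d i (Lt i)) (tensorPow m d τ))).trace = ∏ i, t i := by
    rw [centered_sum_embedAt (fun i => (hτ i).2), Finset.smul_sum]
    simp only [← embedAt_smul]
    rw [mexp_sum_embedAt, tensorPow_mul, trace_tensorPow]
    rfl
  have hpos (i : Fin m) : 0 < t i :=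
    trace_mul_mexp_pos (hτ i)
      ((isHermitian_centered (hLt i) (hτ i).1.isHermitian).smul (Complex.conj_ofReal l))
  have hreal : ∏ i, t i = ((∏ i, (t i).re : ℝ) : ℂ) := by
    push_cast
    exact Finset.prod_congr rfl fun i _ =>
      Complex.eq_re_of_ofReal_le (r := 0) (by simpa using (hpos i).le)
  rw [← centered, hfactor, hreal, Complex.ofReal_re,
    Real.log_prod fun i _ => (Complex.pos_iff.mp (hpos i)).1.ne']
  calc ∑ i, Real.log (t i).re ≤ ∑ i, α i ^ 2 * l ^ 2 / 2 := Finset.sum_le_sum fun i _ => hsg i l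
    _ = _ := by rw [Real.sq_sqrt (by positivity), Finset.sum_mul, Finset.sum_div]

end TensorProduct

theorem subgaussian_tensorization_general {m d : ℕ}
    (Lt : Fin m → Matrix (Fin d) (Fin d) ℂ) (hLt : ∀ i, (Lt i).IsHermitian)
    (τ : Fin m → Matrix (Fin d) (Fin d) ℂ) (hτ : ∀ i, IsDensity (τ i))
    (α : Fin m → ℝ)
    (hsg : ∀ i, IsSubGaussianObs (Lt i) (τ i) (α i)) :
    IsSubGaussianObs ((1 / (m : ℂ)) • ∑ i, embedAt m d i (Lt i)) (tensorPow m d τ)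
      ((1 / (m : ℝ)) * Real.sqrt (∑ i, (α i) ^ 2)) := by
  have h := (isSubGaussianObs_sum_embedAt hLt hτ hsg).ofReal_smul (1 / (m : ℝ))
  push_cast at h
  exact h

/-- **Tensorization of quantum sub-gaussianity.** If each local `L̃ᵢ` is
`αᵢ`-sub-gaussian w.r.t. `τᵢ`, then `L = (1/m) Σᵢ Lᵢ` is
`(1/m)·√(Σᵢ αᵢ²)`-sub-gaussian w.r.t. `τ₁ ⊗ ⋯ ⊗ τ_m`. -/
theorem subgaussian_tensorization {m d : ℕ} (hm : 0 < m)
    (Lt : Fin m → Matrix (Fin d) (Fin d) ℂ) (hLt : ∀ i, (Lt i).IsHermitian)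
    (τ : Fin m → Matrix (Fin d) (Fin d) ℂ) (hτ : ∀ i, IsDensity (τ i))
    (α : Fin m → ℝ) (hα : ∀ i, 0 ≤ α i)
    (hsg : ∀ i, IsSubGaussianObs (Lt i) (τ i) (α i)) :
    IsSubGaussianObs ((1 / (m : ℂ)) • ∑ i, embedAt m d i (Lt i)) (tensorPow m d τ)
      ((1 / (m : ℝ)) * Real.sqrt (∑ i, (α i) ^ 2)) :=
  subgaussian_tensorization_general Lt hLt τ hτ α hsg
end
end

section
/- If a random variable X takes values almost surely in the interval [a, b], then X is ((b − a)/2)-sub-gaussian, i.e. log E[exp(λ(X − E[X]))] ≤ (b − a)²λ²/8 for all real λ. -/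
open MeasureTheory ProbabilityTheory

noncomputable section

/-- A real random variable `X` on `(Ω, μ)` is `β`-sub-gaussian:
`log E[exp(λ(X − E[X]))] ≤ β²λ²/2` for all real `λ`. -/
def SubGaussRV {Ω : Type*} [MeasurableSpace Ω] (μ : Measure Ω) (X : Ω → ℝ) (β : ℝ) : Prop :=
  ∀ l : ℝ, Real.log (∫ ω, Real.exp (l * (X ω - ∫ ω', X ω' ∂μ)) ∂μ) ≤ β ^ 2 * l ^ 2 / 2

theorem hoeffding_lemma_general {Ω : Type*} [MeasurableSpace Ω]
    (μ : Measure Ω) [IsProbabilityMeasure μ]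
    (X : Ω → ℝ) (hX : Measurable X)
    (a b : ℝ) (hab : ∀ᵐ ω ∂μ, X ω ∈ Set.Icc a b) (l : ℝ) :
    Real.log (∫ ω, Real.exp (l * (X ω - ∫ ω', X ω' ∂μ)) ∂μ)
      ≤ (b - a) ^ 2 * l ^ 2 / 8 := by
  calc Real.log (∫ ω, Real.exp (l * (X ω - ∫ ω', X ω' ∂μ)) ∂μ)
      = cgf (fun ω ↦ X ω - μ[X]) μ l := rfl
    _ ≤ (‖b - a‖₊ / 2) ^ 2 * l ^ 2 / 2 :=
      (hasSubgaussianMGF_of_mem_Icc hX.aemeasurable hab).cgf_le l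
    _ = (b - a) ^ 2 * l ^ 2 / 8 := by
      simp only [coe_nnnorm, Real.norm_eq_abs, div_pow, sq_abs]
      ring

/-- **Hoeffding's lemma.** If `X ∈ [a, b]` almost surely, then `X` is
`((b−a)/2)`-sub-gaussian: `log E[exp(λ(X − E[X]))] ≤ (b−a)²λ²/8` for all `λ`. -/
theorem hoeffding_lemma {Ω : Type*} [MeasurableSpace Ω]
    (μ : Measure Ω) [IsProbabilityMeasure μ]
    (X : Ω → ℝ) (hX : Measurable X) (hint : Integrable X μ)
    (a b : ℝ) (hab : ∀ᵐ ω ∂μ, X ω ∈ Set.Icc a b) (l : ℝ) :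
    Real.log (∫ ω, Real.exp (l * (X ω - ∫ ω', X ω' ∂μ)) ∂μ)
      ≤ (b - a) ^ 2 * l ^ 2 / 8 :=
  hoeffding_lemma_general μ X hX a b hab l
end
end

section
/- Let ψ : ℝ → ℝ be convex with ψ(0) = 0 and ψ'(0) = 0 and suppose a real number g satisfies g ≤ inf_{λ>0} (c + ψ(λ))/λ for some c ≥ 0. Then g ≤ ψ*⁻¹(c), where ψ*(t) = sup_{λ≥0}(λt − ψ(λ)) and ψ*⁻¹(s) = inf{t ≥ 0 : ψ*(t) > s}. -/
noncomputable section

/-- Fenchel–Legendre dual over nonnegative arguments: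
`ψ*(t) = sup_{λ≥0}(λt − ψ(λ))`, valued in `EReal`. -/
noncomputable def legendreNN (ψ : ℝ → ℝ) (t : ℝ) : EReal :=
  ⨆ (l : ℝ) (_ : 0 ≤ l), ((l * t - ψ l : ℝ) : EReal)

/-- Generalized inverse `ψ*⁻¹(s) = inf{t ≥ 0 : ψ*(t) > s}`. -/
noncomputable def legendreNNInv (ψ : ℝ → ℝ) (s : ℝ) : ℝ :=
  sInf {t : ℝ | 0 ≤ t ∧ (s : EReal) < legendreNN ψ t}

section LegendreNN

variable {ψ : ℝ → ℝ} {s t : ℝ}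

theorem lt_legendreNN_iff :
    (s : EReal) < legendreNN ψ t ↔ ∃ l, 0 ≤ l ∧ s < l * t - ψ l := by
  simp only [legendreNN, lt_iSup_iff, EReal.coe_lt_coe_iff, exists_prop]

theorem exists_lt_legendreNN (ψ : ℝ → ℝ) (s : ℝ) :
    ∃ t, 0 ≤ t ∧ (s : EReal) < legendreNN ψ t := by
  refine ⟨max 0 (s + ψ 1) + 1, by positivity, lt_legendreNN_iff.2 ⟨1, zero_le_one, ?_⟩⟩
  linarith [le_max_right 0 (s + ψ 1)]

/-- The slope `λ = 0` can never witness `ψ*(t) > s` once `s ≥ -ψ(0)`. -/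
theorem exists_pos_div_lt_of_lt_legendreNN (hs : -ψ 0 ≤ s)
    (h : (s : EReal) < legendreNN ψ t) : ∃ l, 0 < l ∧ (s + ψ l) / l < t := by
  obtain ⟨l, hl, hlt⟩ := lt_legendreNN_iff.1 h
  have hl_pos : 0 < l := hl.lt_of_ne <| by
    rintro rfl
    linarith
  exact ⟨l, hl_pos, by rw [div_lt_iff₀ hl_pos]; linarith⟩

end LegendreNN

theorem le_legendre_inverse_of_le_inf_general (ψ : ℝ → ℝ)
    (hψ0 : ψ 0 = 0)
    (c : ℝ) (hc : 0 ≤ c) (g : ℝ)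
    (hg : ∀ l : ℝ, 0 < l → g ≤ (c + ψ l) / l) :
    g ≤ legendreNNInv ψ c := by
  apply le_csInf (exists_lt_legendreNN ψ c)
  rintro t ⟨-, ht⟩
  obtain ⟨l, hl, hlt⟩ := exists_pos_div_lt_of_lt_legendreNN (by linarith) ht
  exact (hg l hl).trans hlt.le

/-- **Duality between infimum representations and generalized inverse Legendre
transforms** (Boucheron–Lugosi–Massart, Lemma 2.4). If `ψ` is convex with
`ψ(0) = ψ'(0) = 0`, `c ≥ 0`, and `g ≤ inf_{λ>0} (c + ψ(λ))/λ`, then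
`g ≤ ψ*⁻¹(c)`. -/
theorem le_legendre_inverse_of_le_inf (ψ : ℝ → ℝ)
    (hconv : ConvexOn ℝ Set.univ ψ) (hψ0 : ψ 0 = 0) (hψ0' : HasDerivAt ψ 0 0)
    (c : ℝ) (hc : 0 ≤ c) (g : ℝ)
    (hg : ∀ l : ℝ, 0 < l → g ≤ (c + ψ l) / l) :
    g ≤ legendreNNInv ψ c :=
  le_legendre_inverse_of_le_inf_general ψ hψ0 c hc g hg
end
end
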